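/- arXiv:1411.3599 — 3 statements merged into one kernel-verified Lean document; each statement's English description precedes it below -/
import Mathlib

section
/- Let Ω = (-L₁,L₁)×(-L₂,L₂)×(0,1) and let v ∈ C^∞(Ω̄, ℝ³) satisfy: v is constant (equal to e₁) on {z=0}, constant (equal to e₃) on {z=1}, and periodic in x and y (v(-L₁,y,z)=v(L₁,y,z) and v(x,-L₂,z)=v(x,L₂,z)). Then ∫_Ω [tr((∇v)²) - (div v)²] dx = 0. -/
open Real Set MeasureTheory

noncomputable def insL (i : Fin 3) : (Fin 2 → ℝ) →L[ℝ] (Fin 3 → ℝ) :=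
  ContinuousLinearMap.pi (i.insertNth (α := fun _ => (Fin 2 → ℝ) →L[ℝ] ℝ) 0
    (fun k => ContinuousLinearMap.proj k))

theorem hasFDerivAt_insL (i : Fin 3) (c : ℝ) (p : Fin 2 → ℝ) :
    HasFDerivAt (fun q : Fin 2 → ℝ => i.insertNth (α := fun _ => ℝ) c q) (insL i) p := by
  rw [hasFDerivAt_pi']
  intro m
  refine i.succAboveCases ?_ ?_ m
  · simp only [insL, ContinuousLinearMap.proj_pi, Fin.insertNth_apply_same]
    exact hasFDerivAt_const c p
  · intro k
    simp only [insL, ContinuousLinearMap.proj_pi, Fin.insertNth_apply_succAbove]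
    exact hasFDerivAt_apply k p

theorem insL_single (i : Fin 3) (k : Fin 2) :
    insL i (Pi.single k 1) = Pi.single (i.succAbove k) 1 := by
  funext m
  refine i.succAboveCases ?_ ?_ m
  · simp [insL, Pi.single_apply, (Fin.succAbove_ne i k).symm]
  · intro m'
    simp only [insL, ContinuousLinearMap.pi_apply, Fin.insertNth_apply_succAbove,
      ContinuousLinearMap.proj_apply, Pi.single_apply, Fin.succAbove_right_injective.eq_iff]

theorem insertNth_zero_eq (c : ℝ) (p : Fin 2 → ℝ) :
    (0:Fin 3).insertNth c p = ![c, p 0, p 1] := by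
  funext m; fin_cases m <;> rfl

theorem insertNth_one_eq (c : ℝ) (p : Fin 2 → ℝ) :
    (1:Fin 3).insertNth c p = ![p 0, c, p 1] := by
  funext m; fin_cases m <;> rfl

theorem insertNth_two_eq (c : ℝ) (p : Fin 2 → ℝ) :
    (2:Fin 3).insertNth c p = ![p 0, p 1, c] := by
  funext m; fin_cases m <;> rfl

/-- Partial derivative ∂ⱼ vᵢ of a vector field on ℝ³. -/
noncomputable def pder (v : (Fin 3 → ℝ) → (Fin 3 → ℝ)) (x : Fin 3 → ℝ) (i j : Fin 3) : ℝ :=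
  fderiv ℝ v x (Pi.single j 1) i

/-- Ae-equality of open and closed boxes in `Fin n → ℝ`. -/
theorem pi_Ioo_ae_eq_Icc {n : ℕ} (a b : Fin n → ℝ) :
    (Set.pi univ fun k => Ioo (a k) (b k)) =ᵐ[(volume : Measure (Fin n → ℝ))] Icc a b := by
  rw [volume_pi]
  exact MeasureTheory.Measure.univ_pi_Ioo_ae_eq_Icc

section Aux

variable (v : (Fin 3 → ℝ) → (Fin 3 → ℝ))

/-- The flux vector field `w = (v·∇)v - (div v) v`. -/
noncomputable def wfield (x : Fin 3 → ℝ) (i : Fin 3) : ℝ :=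
  ∑ j : Fin 3, (v x j * pder v x i j - pder v x j j * v x i)

/-- The (explicit) derivative of `wfield · i`. -/
noncomputable def Wd (i : Fin 3) (x : Fin 3 → ℝ) : (Fin 3 → ℝ) →L[ℝ] ℝ :=
  ∑ j : Fin 3,
    ((v x j • ((ContinuousLinearMap.proj i).comp
        ((ContinuousLinearMap.apply ℝ (Fin 3 → ℝ) (Pi.single j 1)).comp (fderiv ℝ (fderiv ℝ v) x)))
      + pder v x i j • ((ContinuousLinearMap.proj j).comp (fderiv ℝ v x)))
     - (pder v x j j • ((ContinuousLinearMap.proj i).comp (fderiv ℝ v x))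
      + v x i • ((ContinuousLinearMap.proj j).comp
        ((ContinuousLinearMap.apply ℝ (Fin 3 → ℝ) (Pi.single j 1)).comp (fderiv ℝ (fderiv ℝ v) x)))))

theorem hasFDerivAt_wfield (hv : ContDiff ℝ (⊤ : ℕ∞) v) (i : Fin 3) (x : Fin 3 → ℝ) :
    HasFDerivAt (fun y => wfield v y i) (Wd v i x) x := by
  have hD : ∀ y, HasFDerivAt v (fderiv ℝ v y) y :=
    fun y => (hv.differentiable (by simp) y).hasFDerivAt
  have hH : HasFDerivAt (fderiv ℝ v) (fderiv ℝ (fderiv ℝ v) x) x :=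
    (((hv.fderiv_right (m := (⊤ : ℕ∞)) (by simp)).differentiable (by simp)) x).hasFDerivAt
  have hvj : ∀ j : Fin 3, HasFDerivAt (fun y => v y j)
      ((ContinuousLinearMap.proj j).comp (fderiv ℝ v x)) x := fun j =>
    ((ContinuousLinearMap.proj (R := ℝ) (φ := fun _ : Fin 3 => ℝ) j).hasFDerivAt.comp x (hD x) : _)
  have hp : ∀ m j : Fin 3, HasFDerivAt (fun y => pder v y m j)
      ((ContinuousLinearMap.proj m).comp
        ((ContinuousLinearMap.apply ℝ (Fin 3 → ℝ) (Pi.single j 1)).comp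
          (fderiv ℝ (fderiv ℝ v) x))) x := by
    intro m j
    have h2 := ((ContinuousLinearMap.proj (R := ℝ) (φ := fun _ : Fin 3 => ℝ) m).comp
      (ContinuousLinearMap.apply ℝ (Fin 3 → ℝ) (Pi.single j 1))).hasFDerivAt.comp x hH
    rw [ContinuousLinearMap.comp_assoc] at h2
    exact h2
  unfold wfield Wd
  exact HasFDerivAt.fun_sum fun j _ => ((hvj j).mul (hp i j)).sub ((hp j j).mul (hvj i))

theorem div_value (hv : ContDiff ℝ (⊤ : ℕ∞) v) (x : Fin 3 → ℝ) :
    ∑ i, Wd v i x (Pi.single i 1)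
      = (∑ i, ∑ j, pder v x i j * pder v x j i) - (∑ i, pder v x i i) ^ 2 := by
  have hD : ∀ y, HasFDerivAt v (fderiv ℝ v y) y :=
    fun y => (hv.differentiable (by simp) y).hasFDerivAt
  have hH : HasFDerivAt (fderiv ℝ v) (fderiv ℝ (fderiv ℝ v) x) x :=
    (((hv.fderiv_right (m := (⊤ : ℕ∞)) (by simp)).differentiable (by simp)) x).hasFDerivAt
  have hsym : ∀ u w : Fin 3 → ℝ,
      fderiv ℝ (fderiv ℝ v) x u w = fderiv ℝ (fderiv ℝ v) x w u :=
    fun u w => second_derivative_symmetric hD hH u w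
  set H := fderiv ℝ (fderiv ℝ v) x with hHdef
  have hpder : ∀ i j : Fin 3, fderiv ℝ v x (Pi.single j 1) i = pder v x i j := fun _ _ => rfl
  simp only [Wd, ContinuousLinearMap.sum_apply, ContinuousLinearMap.sub_apply,
    ContinuousLinearMap.add_apply, ContinuousLinearMap.smul_apply,
    ContinuousLinearMap.coe_comp', Function.comp_apply, ContinuousLinearMap.proj_apply,
    ContinuousLinearMap.apply_apply, smul_eq_mul, hpder, ← hHdef]
  have split : ∀ i j : Fin 3,
      v x j * H (Pi.single i 1) (Pi.single j 1) i + pder v x i j * pder v x j i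
        - (pder v x j j * pder v x i i
          + v x i * H (Pi.single i 1) (Pi.single j 1) j)
      = (pder v x i j * pder v x j i - pder v x j j * pder v x i i)
        + (v x j * H (Pi.single i 1) (Pi.single j 1) i
          - v x i * H (Pi.single i 1) (Pi.single j 1) j) := by
    intro i j; ring
  simp only [split, Finset.sum_add_distrib]
  have anti : (∑ i : Fin 3, ∑ j : Fin 3, (v x j * H (Pi.single i 1) (Pi.single j 1) i
      - v x i * H (Pi.single i 1) (Pi.single j 1) j)) = 0 := by
    set f : Fin 3 → Fin 3 → ℝ := fun i j => v x j * H (Pi.single i 1) (Pi.single j 1) i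
      - v x i * H (Pi.single i 1) (Pi.single j 1) j with hf
    have hanti : ∀ i j, f i j + f j i = 0 := by
      intro i j
      simp only [hf, hsym (Pi.single j 1) (Pi.single i 1)]
      ring
    have h2 : (∑ i, ∑ j, f i j) + (∑ i, ∑ j, f i j) = 0 := by
      nth_rewrite 1 [Finset.sum_comm (f := f)]
      rw [← Finset.sum_add_distrib]
      simp only [← Finset.sum_add_distrib]
      calc ∑ i : Fin 3, ∑ j : Fin 3, (f j i + f i j)
          = ∑ i : Fin 3, ∑ j : Fin 3, (0:ℝ) := by
            refine Finset.sum_congr rfl fun i _ => Finset.sum_congr rfl fun j _ => ?_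
            rw [add_comm]; exact hanti i j
        _ = 0 := by simp
    linarith
  rw [anti, add_zero]
  have hsq : (∑ i, pder v x i i) ^ 2 = ∑ i : Fin 3, ∑ j : Fin 3, pder v x j j * pder v x i i := by
    rw [sq, Finset.sum_mul_sum]
    exact Finset.sum_congr rfl fun i _ => Finset.sum_congr rfl fun j _ => mul_comm _ _
  rw [hsq, ← Finset.sum_sub_distrib]
  exact Finset.sum_congr rfl fun i _ => by rw [← Finset.sum_sub_distrib]

theorem wfield_face_eq (hdv : Differentiable ℝ v) (i : Fin 3) (c : ℝ) (p : Fin 2 → ℝ) :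
    wfield v (i.insertNth c p) i =
      ∑ k : Fin 2,
        (v (i.insertNth c p) (i.succAbove k)
            * fderiv ℝ (fun q => v (i.insertNth c q)) p (Pi.single k 1) i
          - fderiv ℝ (fun q => v (i.insertNth c q)) p (Pi.single k 1) (i.succAbove k)
            * v (i.insertNth c p) i) := by
  have hg : HasFDerivAt (fun q => v (i.insertNth c q))
      ((fderiv ℝ v (i.insertNth c p)).comp (insL i)) p :=
    (hdv (i.insertNth c p)).hasFDerivAt.comp p (hasFDerivAt_insL i c p)
  have hpd : ∀ (m : Fin 3) (k : Fin 2),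
      fderiv ℝ (fun q => v (i.insertNth c q)) p (Pi.single k 1) m
        = pder v (i.insertNth c p) m (i.succAbove k) := by
    intro m k
    rw [hg.fderiv]
    simp only [ContinuousLinearMap.coe_comp', Function.comp_apply, insL_single]
    rfl
  unfold wfield
  rw [Fin.sum_univ_succAbove
    (fun j => v (i.insertNth c p) j * pder v (i.insertNth c p) i j
      - pder v (i.insertNth c p) j j * v (i.insertNth c p) i) i]
  have h0 : v (i.insertNth c p) i * pder v (i.insertNth c p) i i
      - pder v (i.insertNth c p) i i * v (i.insertNth c p) i = 0 := by ring
  rw [h0, zero_add]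
  exact Finset.sum_congr rfl fun k _ => by rw [hpd i k, hpd (i.succAbove k) k]

/-- Flux cancellation across a pair of periodic faces. -/
theorem face_cancel (hdv : Differentiable ℝ v) (i : Fin 3) (a b : Fin 3 → ℝ)
    (hper : EqOn (fun q => v (i.insertNth (a i) q)) (fun q => v (i.insertNth (b i) q))
      (Icc (a ∘ i.succAbove) (b ∘ i.succAbove))) :
    (∫ x in Icc (a ∘ i.succAbove) (b ∘ i.succAbove), wfield v (i.insertNth (b i) x) i)
      = ∫ x in Icc (a ∘ i.succAbove) (b ∘ i.succAbove), wfield v (i.insertNth (a i) x) i := by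
  have hUopen : IsOpen (Set.pi univ fun k => Ioo ((a ∘ i.succAbove) k) ((b ∘ i.succAbove) k)) :=
    isOpen_set_pi finite_univ fun _ _ => isOpen_Ioo
  have hUsub : (Set.pi univ fun k => Ioo ((a ∘ i.succAbove) k) ((b ∘ i.succAbove) k))
      ⊆ Icc (a ∘ i.succAbove) (b ∘ i.succAbove) := by
    rw [← Set.pi_univ_Icc]
    exact Set.pi_mono fun k _ => Ioo_subset_Icc_self
  have hmain : EqOn (fun x => wfield v (i.insertNth (b i) x) i)
      (fun x => wfield v (i.insertNth (a i) x) i)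
      (Set.pi univ fun k => Ioo ((a ∘ i.succAbove) k) ((b ∘ i.succAbove) k)) := by
    intro p hp
    have heq : (fun q : Fin 2 → ℝ => v (i.insertNth (a i) q)) =ᶠ[nhds p] fun q : Fin 2 → ℝ => v (i.insertNth (b i) q) :=
      Filter.eventuallyEq_of_mem (hUopen.mem_nhds hp) (hper.mono hUsub)
    have hfd : fderiv ℝ (fun q : Fin 2 → ℝ => v (i.insertNth (a i) q)) p
        = fderiv ℝ (fun q : Fin 2 → ℝ => v (i.insertNth (b i) q)) p := heq.fderiv_eq
    have hval : v (i.insertNth (a i) p) = v (i.insertNth (b i) p) := hper (hUsub hp)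
    show wfield v (i.insertNth (b i) p) i = wfield v (i.insertNth (a i) p) i
    rw [wfield_face_eq v hdv, wfield_face_eq v hdv, ← hfd, ← hval]
  calc (∫ x in Icc (a ∘ i.succAbove) (b ∘ i.succAbove), wfield v (i.insertNth (b i) x) i)
      = ∫ x in (Set.pi univ fun k => Ioo ((a ∘ i.succAbove) k) ((b ∘ i.succAbove) k)),
        wfield v (i.insertNth (b i) x) i := (setIntegral_congr_set (pi_Ioo_ae_eq_Icc _ _)).symm
    _ = ∫ x in (Set.pi univ fun k => Ioo ((a ∘ i.succAbove) k) ((b ∘ i.succAbove) k)),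
        wfield v (i.insertNth (a i) x) i :=
        setIntegral_congr_fun hUopen.measurableSet hmain
    _ = ∫ x in Icc (a ∘ i.succAbove) (b ∘ i.succAbove), wfield v (i.insertNth (a i) x) i :=
        setIntegral_congr_set (pi_Ioo_ae_eq_Icc _ _)

/-- Vanishing of the flux through a face where `v` is constant. -/
theorem face_zero (hdv : Differentiable ℝ v) (i : Fin 3) (c : ℝ) (a' b' : Fin 2 → ℝ)
    (w₀ : Fin 3 → ℝ) (hconst : EqOn (fun q => v (i.insertNth c q)) (fun _ => w₀) (Icc a' b')) :
    (∫ x in Icc a' b', wfield v (i.insertNth c x) i) = 0 := by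
  have hUopen : IsOpen (Set.pi univ fun k => Ioo (a' k) (b' k)) :=
    isOpen_set_pi finite_univ fun _ _ => isOpen_Ioo
  have hUsub : (Set.pi univ fun k => Ioo (a' k) (b' k)) ⊆ Icc a' b' := by
    rw [← Set.pi_univ_Icc]
    exact Set.pi_mono fun k _ => Ioo_subset_Icc_self
  have hmain : EqOn (fun x => wfield v (i.insertNth c x) i) (fun _ => (0:ℝ))
      (Set.pi univ fun k => Ioo (a' k) (b' k)) := by
    intro p hp
    have heq : (fun q : Fin 2 → ℝ => v (i.insertNth c q)) =ᶠ[nhds p] fun _ : Fin 2 → ℝ => w₀ :=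
      Filter.eventuallyEq_of_mem (hUopen.mem_nhds hp) (hconst.mono hUsub)
    have hfd : fderiv ℝ (fun q : Fin 2 → ℝ => v (i.insertNth c q)) p = 0 := by
      rw [heq.fderiv_eq]; exact fderiv_const_apply w₀
    show wfield v (i.insertNth c p) i = 0
    simp only [wfield_face_eq v hdv, hfd, ContinuousLinearMap.zero_apply, Pi.zero_apply,
      mul_zero, zero_mul, sub_zero, Finset.sum_const_zero]
  calc (∫ x in Icc a' b', wfield v (i.insertNth c x) i)
      = ∫ x in (Set.pi univ fun k => Ioo (a' k) (b' k)), wfield v (i.insertNth c x) i :=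
        (setIntegral_congr_set (pi_Ioo_ae_eq_Icc _ _)).symm
    _ = ∫ _x in (Set.pi univ fun k => Ioo (a' k) (b' k)), (0:ℝ) :=
        setIntegral_congr_fun hUopen.measurableSet hmain
    _ = 0 := by simp

end Aux

theorem saddle_splay_integral_vanishes (L₁ L₂ : ℝ) (hL₁ : 0 < L₁) (hL₂ : 0 < L₂)
    (v : (Fin 3 → ℝ) → (Fin 3 → ℝ)) (hv : ContDiff ℝ (⊤ : ℕ∞) v)
    (hbot : ∀ x ∈ Set.Icc (-L₁) L₁, ∀ y ∈ Set.Icc (-L₂) L₂,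
      v ![x, y, 0] = ![1, 0, 0])
    (htop : ∀ x ∈ Set.Icc (-L₁) L₁, ∀ y ∈ Set.Icc (-L₂) L₂,
      v ![x, y, 1] = ![0, 0, 1])
    (hperx : ∀ y ∈ Set.Icc (-L₂) L₂, ∀ z ∈ Set.Icc (0 : ℝ) 1,
      v ![-L₁, y, z] = v ![L₁, y, z])
    (hpery : ∀ x ∈ Set.Icc (-L₁) L₁, ∀ z ∈ Set.Icc (0 : ℝ) 1,
      v ![x, -L₂, z] = v ![x, L₂, z]) :
    ∫ x in {p : Fin 3 → ℝ |
        p 0 ∈ Set.Ioo (-L₁) L₁ ∧ p 1 ∈ Set.Ioo (-L₂) L₂ ∧ p 2 ∈ Set.Ioo (0 : ℝ) 1},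
      ((∑ i : Fin 3, ∑ j : Fin 3, pder v x i j * pder v x j i)
        - (∑ i : Fin 3, pder v x i i) ^ 2) = 0 := by
  have hdv : Differentiable ℝ v := hv.differentiable (by simp)
  set a : Fin 3 → ℝ := ![-L₁, -L₂, 0] with ha
  set b : Fin 3 → ℝ := ![L₁, L₂, 1] with hb
  have hle : a ≤ b := by
    intro i; fin_cases i <;> simp [ha, hb] <;> linarith
  have c0a : a ∘ Fin.succAbove (0:Fin 3) = ![-L₂, (0:ℝ)] := by
    funext k; fin_cases k <;> rfl
  have c0b : b ∘ Fin.succAbove (0:Fin 3) = ![L₂, (1:ℝ)] := by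
    funext k; fin_cases k <;> rfl
  have c1a : a ∘ Fin.succAbove (1:Fin 3) = ![-L₁, (0:ℝ)] := by
    funext k; fin_cases k <;> rfl
  have c1b : b ∘ Fin.succAbove (1:Fin 3) = ![L₁, (1:ℝ)] := by
    funext k; fin_cases k <;> rfl
  have c2a : a ∘ Fin.succAbove (2:Fin 3) = ![-L₁, -L₂] := by
    funext k; fin_cases k <;> rfl
  have c2b : b ∘ Fin.succAbove (2:Fin 3) = ![L₁, L₂] := by
    funext k; fin_cases k <;> rfl
  -- continuity
  have hfc : Continuous fun x => fderiv ℝ v x := (hv.fderiv_right (m := (⊤ : ℕ∞)) (by simp)).continuous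
  have hpc : ∀ i j : Fin 3, Continuous fun x => pder v x i j := fun i j =>
    (continuous_apply i).comp
      (((ContinuousLinearMap.apply ℝ (Fin 3 → ℝ) (Pi.single j 1)).continuous).comp hfc)
  have hF : Continuous fun x => (∑ i : Fin 3, ∑ j : Fin 3, pder v x i j * pder v x j i)
      - (∑ i : Fin 3, pder v x i i) ^ 2 :=
    (continuous_finset_sum _ fun i _ => continuous_finset_sum _ fun j _ =>
      (hpc i j).mul (hpc j i)).sub ((continuous_finset_sum _ fun i _ => hpc i i).pow 2)
  have hwc : ∀ i : Fin 3, Continuous fun x => wfield v x i := fun i =>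
    continuous_finset_sum _ fun j _ =>
      (((continuous_apply j).comp hv.continuous).mul (hpc i j)).sub
        ((hpc j j).mul ((continuous_apply i).comp hv.continuous))
  -- divergence theorem
  have Hi : IntegrableOn (fun x => ∑ i, Wd v i x (Pi.single i 1)) (Icc a b) := by
    have heq : (fun x => ∑ i, Wd v i x (Pi.single i 1))
        = fun x => (∑ i : Fin 3, ∑ j : Fin 3, pder v x i j * pder v x j i)
          - (∑ i : Fin 3, pder v x i i) ^ 2 := funext (div_value v hv)
    rw [heq]
    exact hF.integrableOn_Icc
  have key := MeasureTheory.integral_divergence_of_hasFDerivAt_off_countable' a b hle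
    (fun i x => wfield v x i) (fun i x => Wd v i x) ∅ countable_empty
    (fun i => (hwc i).continuousOn)
    (fun x _ i => hasFDerivAt_wfield v hv i x) Hi
  -- identify the domain
  have hSae : {p : Fin 3 → ℝ |
      p 0 ∈ Set.Ioo (-L₁) L₁ ∧ p 1 ∈ Set.Ioo (-L₂) L₂ ∧ p 2 ∈ Set.Ioo (0 : ℝ) 1}
      =ᵐ[(volume : Measure (Fin 3 → ℝ))] Icc a b := by
    have hSeq : {p : Fin 3 → ℝ |
        p 0 ∈ Set.Ioo (-L₁) L₁ ∧ p 1 ∈ Set.Ioo (-L₂) L₂ ∧ p 2 ∈ Set.Ioo (0 : ℝ) 1}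
        = Set.pi univ fun i => Ioo (a i) (b i) := by
      ext p
      constructor
      · rintro ⟨h0, h1, h2⟩ m _
        fin_cases m <;> simpa [ha, hb]
      · intro h
        exact ⟨by simpa [ha, hb] using h 0 (mem_univ _),
          by simpa [ha, hb] using h 1 (mem_univ _),
          by simpa [ha, hb] using h 2 (mem_univ _)⟩
    rw [hSeq]
    exact pi_Ioo_ae_eq_Icc a b
  calc ∫ x in {p : Fin 3 → ℝ |
        p 0 ∈ Set.Ioo (-L₁) L₁ ∧ p 1 ∈ Set.Ioo (-L₂) L₂ ∧ p 2 ∈ Set.Ioo (0 : ℝ) 1},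
      ((∑ i : Fin 3, ∑ j : Fin 3, pder v x i j * pder v x j i)
        - (∑ i : Fin 3, pder v x i i) ^ 2)
      = ∫ x in Icc a b,
        ((∑ i : Fin 3, ∑ j : Fin 3, pder v x i j * pder v x j i)
          - (∑ i : Fin 3, pder v x i i) ^ 2) := setIntegral_congr_set hSae
    _ = ∫ x in Icc a b, ∑ i, Wd v i x (Pi.single i 1) :=
        (setIntegral_congr_fun measurableSet_Icc fun x _ => (div_value v hv x).symm)
    _ = ∑ i : Fin 3,
        ((∫ x in Icc (a ∘ i.succAbove) (b ∘ i.succAbove), wfield v (i.insertNth (b i) x) i)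
          - ∫ x in Icc (a ∘ i.succAbove) (b ∘ i.succAbove), wfield v (i.insertNth (a i) x) i) :=
        by exact key
    _ = 0 := by
      rw [Fin.sum_univ_three]
      have h0 : (∫ x in Icc (a ∘ Fin.succAbove (0:Fin 3)) (b ∘ Fin.succAbove (0:Fin 3)),
            wfield v ((0:Fin 3).insertNth (b 0) x) 0)
          = ∫ x in Icc (a ∘ Fin.succAbove (0:Fin 3)) (b ∘ Fin.succAbove (0:Fin 3)),
            wfield v ((0:Fin 3).insertNth (a 0) x) 0 := by
        refine face_cancel v hdv 0 a b ?_
        intro q hq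
        rw [c0a, c0b] at hq
        obtain ⟨hq1, hq2⟩ := hq
        have hy : q 0 ∈ Set.Icc (-L₂) L₂ := ⟨by simpa using hq1 0, by simpa using hq2 0⟩
        have hz : q 1 ∈ Set.Icc (0:ℝ) 1 := ⟨by simpa using hq1 1, by simpa using hq2 1⟩
        show v ((0:Fin 3).insertNth (a 0) q) = v ((0:Fin 3).insertNth (b 0) q)
        rw [insertNth_zero_eq, insertNth_zero_eq]
        have ha0 : a 0 = -L₁ := by rw [ha]; rfl
        have hb0 : b 0 = L₁ := by rw [hb]; rfl
        rw [ha0, hb0]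
        exact hperx (q 0) hy (q 1) hz
      have h1 : (∫ x in Icc (a ∘ Fin.succAbove (1:Fin 3)) (b ∘ Fin.succAbove (1:Fin 3)),
            wfield v ((1:Fin 3).insertNth (b 1) x) 1)
          = ∫ x in Icc (a ∘ Fin.succAbove (1:Fin 3)) (b ∘ Fin.succAbove (1:Fin 3)),
            wfield v ((1:Fin 3).insertNth (a 1) x) 1 := by
        refine face_cancel v hdv 1 a b ?_
        intro q hq
        rw [c1a, c1b] at hq
        obtain ⟨hq1, hq2⟩ := hq
        have hx : q 0 ∈ Set.Icc (-L₁) L₁ := ⟨by simpa using hq1 0, by simpa using hq2 0⟩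
        have hz : q 1 ∈ Set.Icc (0:ℝ) 1 := ⟨by simpa using hq1 1, by simpa using hq2 1⟩
        show v ((1:Fin 3).insertNth (a 1) q) = v ((1:Fin 3).insertNth (b 1) q)
        rw [insertNth_one_eq, insertNth_one_eq]
        have ha1 : a 1 = -L₂ := by rw [ha]; rfl
        have hb1 : b 1 = L₂ := by rw [hb]; rfl
        rw [ha1, hb1]
        exact hpery (q 0) hx (q 1) hz
      have h2b : (∫ x in Icc (a ∘ Fin.succAbove (2:Fin 3)) (b ∘ Fin.succAbove (2:Fin 3)),
            wfield v ((2:Fin 3).insertNth (b 2) x) 2) = 0 := by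
        refine face_zero v hdv 2 (b 2) _ _ ![0,0,1] ?_
        intro q hq
        rw [c2a, c2b] at hq
        obtain ⟨hq1, hq2⟩ := hq
        have hx : q 0 ∈ Set.Icc (-L₁) L₁ := ⟨by simpa using hq1 0, by simpa using hq2 0⟩
        have hy : q 1 ∈ Set.Icc (-L₂) L₂ := ⟨by simpa using hq1 1, by simpa using hq2 1⟩
        show v ((2:Fin 3).insertNth (b 2) q) = ![0,0,1]
        rw [insertNth_two_eq]
        have hb2 : b 2 = 1 := by rw [hb]; rfl
        rw [hb2]
        exact htop (q 0) hx (q 1) hy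
      have h2a : (∫ x in Icc (a ∘ Fin.succAbove (2:Fin 3)) (b ∘ Fin.succAbove (2:Fin 3)),
            wfield v ((2:Fin 3).insertNth (a 2) x) 2) = 0 := by
        refine face_zero v hdv 2 (a 2) _ _ ![1,0,0] ?_
        intro q hq
        rw [c2a, c2b] at hq
        obtain ⟨hq1, hq2⟩ := hq
        have hx : q 0 ∈ Set.Icc (-L₁) L₁ := ⟨by simpa using hq1 0, by simpa using hq2 0⟩
        have hy : q 1 ∈ Set.Icc (-L₂) L₂ := ⟨by simpa using hq1 1, by simpa using hq2 1⟩
        show v ((2:Fin 3).insertNth (a 2) q) = ![1,0,0]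
        rw [insertNth_two_eq]
        have ha2 : a 2 = 0 := by rw [ha]; rfl
        rw [ha2]
        exact hbot (q 0) hx (q 1) hy
      rw [h0, h1, h2b, h2a]
      ring
end

section
/- Let K₁,K₂,K₃ > 0, t ≥ 0 and define η(C) = ∫₀^{π/2} (K₁cos²u + K₃sin²u)^{1/2} · (C - K₂²t²cos²u/(K₂cos²u + K₃sin²u))^{-1/2} du for C > K₂t². Then η is strictly monotone decreasing, η(C) → ∞ as C → (K₂t²)⁺, η(C) → 0 as C → ∞, and hence for each α > 0 the equation η(C) = α has a unique solution C_α > K₂t². -/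
open Real Set Filter Topology intervalIntegral

/-!
Write `η(C) = ∫₀^{π/2} f(u) / √(C - g(u)) du` with `f ≥ √(min K₁ K₃) > 0` and `g ≤ K₂t²`.
The integrand is positive, continuous in `(C, u)` and strictly decreasing in `C`, and bounded by
`f(u) / √(C - K₂t²)`, which gives monotonicity, continuity and `η(C) → 0`.
At the endpoint, `K₂t² - g(u) = K₂K₃t² sin²u / (K₂cos²u + K₃sin²u)` vanishes quadratically
at `u = 0`, so `η(K₂t² + ε)` dominates a multiple of
`∫₀^{π/2} (ε + u²)^{-1/2} du = arsinh (π / (2√ε))`, which diverges as `ε → 0⁺`.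
The intermediate value theorem then solves `η(C) = α`.
-/

noncomputable def heightMap (f g : ℝ → ℝ) (b C : ℝ) : ℝ :=
  ∫ u in (0 : ℝ)..b, f u / √(C - g u)

theorem integral_inv_sqrt_add_sq {ε : ℝ} (hε : 0 < ε) (b : ℝ) :
    ∫ u in (0 : ℝ)..b, (√(ε + u ^ 2))⁻¹ = arsinh (b / √ε) := by
  have hderiv : ∀ u ∈ uIcc (0 : ℝ) b,
      HasDerivAt (fun x => arsinh (x / √ε)) (√(ε + u ^ 2))⁻¹ u := by
    intro u _
    have hsplit : ε + u ^ 2 = (1 + (u / √ε) ^ 2) * ε := by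
      rw [div_pow, sq_sqrt hε.le]; field_simp
    have := (hasDerivAt_arsinh (u / √ε)).comp u ((hasDerivAt_id u).div_const √ε)
    refine this.congr_deriv ?_
    rw [hsplit, sqrt_mul (by positivity), mul_inv, one_div]
  have hcont : Continuous fun u : ℝ => (√(ε + u ^ 2))⁻¹ :=
    Continuous.inv₀ (by fun_prop) fun u => (sqrt_pos.2 (by positivity)).ne'
  rw [integral_eq_sub_of_hasDerivAt hderiv (hcont.intervalIntegrable _ _)]
  simp

theorem tendsto_arsinh_div_sqrt_nhdsGT_zero {b : ℝ} (hb : 0 < b) :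
    Tendsto (fun ε => arsinh (b / √ε)) (𝓝[>] 0) atTop := by
  have hsqrt : Tendsto (√·) (𝓝[>] (0 : ℝ)) (𝓝[>] 0) :=
    tendsto_nhdsWithin_of_tendsto_nhds_of_eventually_within _
      (by simpa using (continuous_sqrt.tendsto (0 : ℝ)).mono_left nhdsWithin_le_nhds)
      (eventually_nhdsWithin_of_forall fun _ hε => sqrt_pos.2 hε)
  exact sinhOrderIso.symm.tendsto_atTop.comp
    ((tendsto_inv_nhdsGT_zero.comp hsqrt).const_mul_atTop hb)

theorem existsUnique_eq_of_strictAntiOn_Ioi {η : ℝ → ℝ} {c α : ℝ}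
    (hcont : ContinuousOn η (Ioi c)) (hanti : StrictAntiOn η (Ioi c))
    (hc : Tendsto η (𝓝[>] c) atTop) (htop : Tendsto η atTop (𝓝 0)) (hα : 0 < α) :
    ∃! C, C ∈ Ioi c ∧ η C = α := by
  obtain ⟨C₁, hC₁, hαC₁⟩ :=
    (eventually_mem_nhdsWithin.and (hc.eventually_ge_atTop α)).exists
  obtain ⟨C₂, hC₁₂, hC₂α⟩ :=
    ((eventually_gt_atTop C₁).and (htop.eventually_lt_const hα)).exists
  have hsub : Icc C₁ C₂ ⊆ Ioi c := fun x hx => lt_of_lt_of_le hC₁ hx.1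
  obtain ⟨C, hC, hCα⟩ :=
    intermediate_value_Icc' hC₁₂.le (hcont.mono hsub) ⟨hC₂α.le, hαC₁⟩
  exact ⟨C, ⟨hsub hC, hCα⟩, fun C' ⟨hC', hC'α⟩ =>
    hanti.injOn hC' (hsub hC) (hC'α.trans hCα.symm)⟩

section heightMap

variable {f g : ℝ → ℝ} {b c : ℝ}

theorem continuous_div_sqrt_sub (hf : Continuous f) (hg : Continuous g) {C : ℝ}
    (hC : ∀ u, g u < C) : Continuous fun u => f u / √(C - g u) :=
  hf.div (by fun_prop) fun u => (sqrt_pos.2 (sub_pos.2 (hC u))).ne'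

theorem continuousOn_heightMap (hf : Continuous f) (hg : Continuous g) (hgc : ∀ u, g u ≤ c) :
    ContinuousOn (heightMap f g b) (Ioi c) := by
  rw [continuousOn_iff_continuous_domRestrict]
  have hF : Continuous (Function.uncurry fun (C : Ioi c) u => f u / √(C - g u)) :=
    (hf.comp continuous_snd).div (by fun_prop) fun p =>
      (sqrt_pos.2 (sub_pos.2 ((hgc p.2).trans_lt p.1.2))).ne'
  exact continuous_parametric_intervalIntegral_of_continuous' hF 0 b

theorem strictAntiOn_heightMap (hb : 0 < b) (hf : Continuous f) (hg : Continuous g)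
    (hfpos : ∀ u, 0 < f u) (hgc : ∀ u, g u ≤ c) :
    StrictAntiOn (heightMap f g b) (Ioi c) := by
  intro C₁ hC₁ C₂ hC₂ hlt
  have hlt_pt : ∀ u, f u / √(C₂ - g u) < f u / √(C₁ - g u) := fun u =>
    div_lt_div_of_pos_left (hfpos u) (sqrt_pos.2 (sub_pos.2 ((hgc u).trans_lt hC₁)))
      (sqrt_lt_sqrt (sub_pos.2 ((hgc u).trans_lt hC₁)).le (by linarith))
  exact integral_lt_integral_of_continuousOn_of_le_of_exists_lt hb
    (continuous_div_sqrt_sub hf hg fun u => (hgc u).trans_lt hC₂).continuousOn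
    (continuous_div_sqrt_sub hf hg fun u => (hgc u).trans_lt hC₁).continuousOn
    (fun u _ => (hlt_pt u).le) ⟨0, left_mem_Icc.2 hb.le, hlt_pt 0⟩

theorem heightMap_le (hb : 0 ≤ b) (hf : Continuous f) (hg : Continuous g)
    (hf₀ : ∀ u, 0 ≤ f u) (hgc : ∀ u, g u ≤ c) {C : ℝ} (hC : c < C) :
    heightMap f g b C ≤ (∫ u in (0 : ℝ)..b, f u) / √(C - c) := by
  rw [← integral_div]
  refine integral_mono_on hb
    ((continuous_div_sqrt_sub hf hg fun u => (hgc u).trans_lt hC).intervalIntegrable _ _)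
    ((hf.div_const _).intervalIntegrable _ _) fun u _ => ?_
  exact div_le_div_of_nonneg_left (hf₀ u) (sqrt_pos.2 (sub_pos.2 hC))
    (sqrt_le_sqrt (by linarith [hgc u]))

theorem tendsto_heightMap_atTop (hb : 0 ≤ b) (hf : Continuous f) (hg : Continuous g)
    (hf₀ : ∀ u, 0 ≤ f u) (hgc : ∀ u, g u ≤ c) :
    Tendsto (heightMap f g b) atTop (𝓝 0) := by
  have hbound : Tendsto (fun C => (∫ u in (0 : ℝ)..b, f u) / √(C - c)) atTop (𝓝 0) :=
    tendsto_const_nhds.div_atTop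
      (tendsto_sqrt_atTop.comp (tendsto_atTop_add_const_right _ _ tendsto_id))
  refine tendsto_of_tendsto_of_tendsto_of_le_of_le' tendsto_const_nhds hbound ?_ ?_
  · exact Eventually.of_forall fun C =>
      integral_nonneg hb fun u _ => div_nonneg (hf₀ u) (sqrt_nonneg _)
  · filter_upwards [eventually_gt_atTop c] with C hC using heightMap_le hb hf hg hf₀ hgc hC

theorem le_heightMap_add (hb : 0 ≤ b) (hf : Continuous f) (hg : Continuous g)
    {m B : ℝ} (hm : 0 ≤ m) (hfm : ∀ u, m ≤ f u) (hgc : ∀ u, g u ≤ c)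
    (hgB : ∀ u ∈ Icc 0 b, c - g u ≤ B * u ^ 2) {ε : ℝ} (hε : 0 < ε) :
    m / √(|B| + 1) * arsinh (b / √ε) ≤ heightMap f g b (c + ε) := by
  have hpt : ∀ u ∈ Icc 0 b,
      m / √(|B| + 1) * (√(ε + u ^ 2))⁻¹ ≤ f u / √(c + ε - g u) := by
    intro u hu
    -- `|B| + 1` rather than `B`, so that the bound holds whatever the sign of `B`
    have hrad : c + ε - g u ≤ (|B| + 1) * (ε + u ^ 2) := by
      nlinarith [hgB u hu, le_abs_self B, abs_nonneg B, sq_nonneg u]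
    rw [← div_eq_mul_inv, div_div, ← sqrt_mul (by positivity)]
    exact div_le_div₀ (hm.trans (hfm u)) (hfm u)
      (sqrt_pos.2 (by linarith [hgc u])) (sqrt_le_sqrt hrad)
  rw [← integral_inv_sqrt_add_sq hε, ← integral_const_mul]
  exact integral_mono_on hb
    ((continuous_const.mul (Continuous.inv₀ (by fun_prop)
      fun u => (sqrt_pos.2 (by positivity)).ne')).intervalIntegrable _ _)
    ((continuous_div_sqrt_sub hf hg fun u => by linarith [hgc u]).intervalIntegrable _ _) hpt

theorem tendsto_heightMap_nhdsGT (hb : 0 < b) (hf : Continuous f) (hg : Continuous g)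
    {m B : ℝ} (hm : 0 < m) (hfm : ∀ u, m ≤ f u) (hgc : ∀ u, g u ≤ c)
    (hgB : ∀ u ∈ Icc 0 b, c - g u ≤ B * u ^ 2) :
    Tendsto (heightMap f g b) (𝓝[>] c) atTop := by
  have hshift : Tendsto (· - c) (𝓝[>] c) (𝓝[>] 0) :=
    tendsto_nhdsWithin_of_tendsto_nhds_of_eventually_within _
      (by simpa using ((continuous_sub_right c).tendsto c).mono_left nhdsWithin_le_nhds)
      (eventually_nhdsWithin_of_forall fun _ hC => mem_Ioi.2 (sub_pos.2 hC))
  refine tendsto_atTop_mono' _ ?_ (((tendsto_arsinh_div_sqrt_nhdsGT_zero hb).const_mul_atTop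
    (div_pos hm (sqrt_pos.2 (by positivity : (0 : ℝ) < |B| + 1)))).comp hshift)
  filter_upwards [self_mem_nhdsWithin] with C hC
  simpa using le_heightMap_add hb.le hf hg hm.le hfm hgc hgB (sub_pos.2 hC)

end heightMap

section anisotropy

variable {a b : ℝ}

theorem min_le_mul_cos_sq_add_mul_sin_sq (a b u : ℝ) :
    min a b ≤ a * cos u ^ 2 + b * sin u ^ 2 :=
  calc min a b = min a b * cos u ^ 2 + min a b * sin u ^ 2 := by
        rw [← mul_add, cos_sq_add_sin_sq, mul_one]
    _ ≤ a * cos u ^ 2 + b * sin u ^ 2 := by gcongr <;> simp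

theorem mul_cos_sq_add_mul_sin_sq_pos (ha : 0 < a) (hb : 0 < b) (u : ℝ) :
    0 < a * cos u ^ 2 + b * sin u ^ 2 :=
  (lt_min ha hb).trans_le (min_le_mul_cos_sq_add_mul_sin_sq a b u)

theorem sub_div_mul_cos_sq_add_mul_sin_sq (ha : 0 < a) (hb : 0 < b) (t u : ℝ) :
    a * t ^ 2 - a ^ 2 * t ^ 2 * cos u ^ 2 / (a * cos u ^ 2 + b * sin u ^ 2) =
      a * b * t ^ 2 * sin u ^ 2 / (a * cos u ^ 2 + b * sin u ^ 2) := by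
  field_simp [(mul_cos_sq_add_mul_sin_sq_pos ha hb u).ne']
  ring

theorem div_mul_cos_sq_add_mul_sin_sq_le (ha : 0 < a) (hb : 0 < b) (t u : ℝ) :
    a ^ 2 * t ^ 2 * cos u ^ 2 / (a * cos u ^ 2 + b * sin u ^ 2) ≤ a * t ^ 2 := by
  have := sub_div_mul_cos_sq_add_mul_sin_sq ha hb t u
  have : 0 ≤ a * b * t ^ 2 * sin u ^ 2 / (a * cos u ^ 2 + b * sin u ^ 2) :=
    div_nonneg (by positivity) (mul_cos_sq_add_mul_sin_sq_pos ha hb u).le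
  linarith

theorem sub_div_mul_cos_sq_add_mul_sin_sq_le_sq (ha : 0 < a) (hb : 0 < b) (t u : ℝ) :
    a * t ^ 2 - a ^ 2 * t ^ 2 * cos u ^ 2 / (a * cos u ^ 2 + b * sin u ^ 2) ≤
      a * b * t ^ 2 / min a b * u ^ 2 := by
  rw [sub_div_mul_cos_sq_add_mul_sin_sq ha hb]
  calc a * b * t ^ 2 * sin u ^ 2 / (a * cos u ^ 2 + b * sin u ^ 2)
      ≤ a * b * t ^ 2 * sin u ^ 2 / min a b :=
        div_le_div_of_nonneg_left (by positivity) (lt_min ha hb)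
          (min_le_mul_cos_sq_add_mul_sin_sq a b u)
    _ ≤ a * b * t ^ 2 * u ^ 2 / min a b :=
        div_le_div_of_nonneg_right (mul_le_mul_of_nonneg_left sin_sq_le_sq (by positivity))
          (lt_min ha hb).le
    _ = a * b * t ^ 2 / min a b * u ^ 2 := by ring

end anisotropy

theorem height_map_general_constants_general (K₁ K₂ K₃ t : ℝ)
    (hK₁ : 0 < K₁) (hK₂ : 0 < K₂) (hK₃ : 0 < K₃) :
    let η : ℝ → ℝ := fun C =>
      ∫ u in (0 : ℝ)..(π / 2),
        Real.sqrt (K₁ * Real.cos u ^ 2 + K₃ * Real.sin u ^ 2) /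
          Real.sqrt (C - K₂ ^ 2 * t ^ 2 * Real.cos u ^ 2 /
            (K₂ * Real.cos u ^ 2 + K₃ * Real.sin u ^ 2))
    StrictAntiOn η (Set.Ioi (K₂ * t ^ 2)) ∧
    Filter.Tendsto η (𝓝[>] (K₂ * t ^ 2)) Filter.atTop ∧
    Filter.Tendsto η Filter.atTop (𝓝 0) ∧
    ∀ α : ℝ, 0 < α → ∃! C : ℝ, C ∈ Set.Ioi (K₂ * t ^ 2) ∧ η C = α := by
  set f : ℝ → ℝ := fun u => √(K₁ * cos u ^ 2 + K₃ * sin u ^ 2)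
  set g : ℝ → ℝ := fun u => K₂ ^ 2 * t ^ 2 * cos u ^ 2 / (K₂ * cos u ^ 2 + K₃ * sin u ^ 2)
  change let η := heightMap f g (π / 2); _
  intro η
  have hf : Continuous f := by fun_prop
  have hg : Continuous g :=
    Continuous.div (by fun_prop) (by fun_prop) fun u =>
      (mul_cos_sq_add_mul_sin_sq_pos hK₂ hK₃ u).ne'
  have hfm : ∀ u, √(min K₁ K₃) ≤ f u := fun u =>
    sqrt_le_sqrt (min_le_mul_cos_sq_add_mul_sin_sq K₁ K₃ u)
  have hm : 0 < √(min K₁ K₃) := sqrt_pos.2 (lt_min hK₁ hK₃)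
  have hgc : ∀ u, g u ≤ K₂ * t ^ 2 := div_mul_cos_sq_add_mul_sin_sq_le hK₂ hK₃ t
  have hb : (0 : ℝ) < π / 2 := by positivity
  have hanti : StrictAntiOn η (Ioi (K₂ * t ^ 2)) :=
    strictAntiOn_heightMap hb hf hg (fun u => hm.trans_le (hfm u)) hgc
  have hc : Tendsto η (𝓝[>] (K₂ * t ^ 2)) atTop :=
    tendsto_heightMap_nhdsGT hb hf hg hm hfm hgc fun u _ =>
      sub_div_mul_cos_sq_add_mul_sin_sq_le_sq hK₂ hK₃ t u
  have htop : Tendsto η atTop (𝓝 0) :=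
    tendsto_heightMap_atTop hb.le hf hg (fun u => hm.le.trans (hfm u)) hgc
  exact ⟨hanti, hc, htop, fun α hα => existsUnique_eq_of_strictAntiOn_Ioi
    (continuousOn_heightMap hf hg hgc) hanti hc htop hα⟩

theorem height_map_general_constants (K₁ K₂ K₃ t : ℝ)
    (hK₁ : 0 < K₁) (hK₂ : 0 < K₂) (hK₃ : 0 < K₃) (ht : 0 ≤ t) :
    let η : ℝ → ℝ := fun C =>
      ∫ u in (0 : ℝ)..(π / 2),
        Real.sqrt (K₁ * Real.cos u ^ 2 + K₃ * Real.sin u ^ 2) /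
          Real.sqrt (C - K₂ ^ 2 * t ^ 2 * Real.cos u ^ 2 /
            (K₂ * Real.cos u ^ 2 + K₃ * Real.sin u ^ 2))
    StrictAntiOn η (Set.Ioi (K₂ * t ^ 2)) ∧
    Filter.Tendsto η (𝓝[>] (K₂ * t ^ 2)) Filter.atTop ∧
    Filter.Tendsto η Filter.atTop (𝓝 0) ∧
    ∀ α : ℝ, 0 < α → ∃! C : ℝ, C ∈ Set.Ioi (K₂ * t ^ 2) ∧ η C = α :=
  height_map_general_constants_general K₁ K₂ K₃ t hK₁ hK₂ hK₃
end

section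
/- Let Ω = (-L₁,L₁)×(-L₂,L₂)×(0,1), t ≥ 0, and define H(v) = ∫_Ω |∇v|² + 2t v·(∇×v) - (π²/4 + t²)|v|² dx over v ∈ W^{1,2}(Ω,ℝ³) vanishing at z=0 and z=1 and periodic in x and y. If t ≤ 0.766 then there exists γ_t > 0 such that H(v) ≥ γ_t ∫_Ω |v|² dx for all such v; one may take γ_t = π²(1 - 1/(2√2)) - π²/4 - (1+4√2)t². -/
open Real Set MeasureTheory

/-- The curl ∇ × v of a vector field on ℝ³. -/
noncomputable def curl (v : (Fin 3 → ℝ) → (Fin 3 → ℝ)) (x : Fin 3 → ℝ) : Fin 3 → ℝ :=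
  ![pder v x 2 1 - pder v x 1 2, pder v x 0 2 - pder v x 2 0, pder v x 1 0 - pder v x 0 1]

/-!
Pointwise `|∇ × v|² ≤ 2 |∇v|²`, so Cauchy's inequality with `ε = 4t` gives
`2t v·(∇ × v) ≥ -|∇v|²/(2√2) - 4√2 t² |v|²`. Discarding every derivative except `∂_z v` leaves the
density `(1 - 1/(2√2)) |∂_z v|² - (π²/4 + (1 + 4√2) t²) |v|²`, and on each vertical segment
Wirtinger's inequality `∫₀¹ f'² ≥ π² ∫₀¹ f²` for `f(0) = f(1) = 0` (the sharp Poincaré inequality)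
turns `|∂_z v|²` into `π² |v|²`.
-/

lemma Continuous.integrableOn_of_isBounded {X E : Type*} [MetricSpace X] [ProperSpace X]
    [MeasurableSpace X] [OpensMeasurableSpace X] {μ : Measure X} [IsFiniteMeasureOnCompacts μ]
    [NormedAddCommGroup E] {f : X → E} (hf : Continuous f) {s : Set X}
    (hs : Bornology.IsBounded s) : IntegrableOn f s μ :=
  (hf.continuousOn.integrableOn_compact hs.isCompact_closure).mono_set subset_closure

lemma hasDerivAt_neg_mul_tan {l c x : ℝ} (hx : cos (l * (x - c)) ≠ 0) :
    HasDerivAt (fun x => -l * tan (l * (x - c))) (-l ^ 2 - (-l * tan (l * (x - c))) ^ 2) x := by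
  refine (((hasDerivAt_tan hx).comp x
    (((hasDerivAt_id x).sub_const c).const_mul l)).const_mul (-l)).congr_deriv ?_
  rw [tan_eq_sin_div_cos]
  generalize l * (x - c) = θ at hx ⊢
  field_simp
  linear_combination l ^ 2 * sin_sq_add_cos_sq θ

section Wirtinger

variable {a b : ℝ} {f f' : ℝ → ℝ}

/-- The Riccati function `w = -l tan (l (x - (a + b)/2))` solves `w' = -l² - w²` and stays regular
on `[a, b]` because `l < π / (b - a)`; hence `f'² - l² f² - (w f²)' = (f' - w f)² ≥ 0`, and the
boundary term `w f²` vanishes at `a` and `b`. -/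
lemma wirtinger_inequality_of_lt (hab : a < b) (hf : ∀ x ∈ Icc a b, HasDerivAt f (f' x) x)
    (hf' : ContinuousOn f' (Icc a b)) (ha : f a = 0) (hb : f b = 0) {l : ℝ} (hl₀ : 0 ≤ l)
    (hl : l < π / (b - a)) :
    l ^ 2 * ∫ x in a..b, f x ^ 2 ≤ ∫ x in a..b, f' x ^ 2 := by
  have hfc : ContinuousOn f (Icc a b) := fun x hx => (hf x hx).continuousAt.continuousWithinAt
  set w : ℝ → ℝ := fun x => -l * tan (l * (x - (a + b) / 2))
  have hcos : ∀ x ∈ Icc a b, 0 < cos (l * (x - (a + b) / 2)) := by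
    intro x hx
    have hdist : |x - (a + b) / 2| ≤ (b - a) / 2 :=
      abs_le.2 ⟨by linarith [hx.1], by linarith [hx.2]⟩
    have hlab : l * (b - a) < π := by rwa [lt_div_iff₀ (by linarith)] at hl
    have : |l * (x - (a + b) / 2)| < π / 2 := by
      rw [abs_mul, abs_of_nonneg hl₀]
      nlinarith [abs_nonneg (x - (a + b) / 2)]
    exact cos_pos_of_mem_Ioo (abs_lt.1 this)
  have hw : ∀ x ∈ Icc a b, HasDerivAt w (-l ^ 2 - w x ^ 2) x :=
    fun x hx => hasDerivAt_neg_mul_tan (hcos x hx).ne'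
  have hint : ∀ g : ℝ → ℝ, ContinuousOn g (Icc a b) →
      IntervalIntegrable (fun x => g x ^ 2) volume a b :=
    fun g hg => (hg.pow 2).intervalIntegrable_of_Icc hab.le
  have key := intervalIntegral.sub_le_integral_of_hasDeriv_right_of_le hab.le
    (g := fun x => w x * f x ^ 2)
    (g' := fun x => (-l ^ 2 - w x ^ 2) * f x ^ 2 + w x * (2 * f x * f' x))
    (φ := fun x => f' x ^ 2 - l ^ 2 * f x ^ 2)
    (fun x hx => ((hw x hx).continuousAt.mul ((hf x hx).continuousAt.pow 2)).continuousWithinAt)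
    (fun x hx => (((hw x (Ioo_subset_Icc_self hx)).mul
      ((hf x (Ioo_subset_Icc_self hx)).fun_pow 2)).congr_deriv (by ring)).hasDerivWithinAt)
    ((hf'.pow 2).sub (continuousOn_const.mul (hfc.pow 2))).integrableOn_Icc
    (fun x _ => by nlinarith [sq_nonneg (f' x - w x * f x)])
  rw [intervalIntegral.integral_sub (hint f' hf') ((hint f hfc).const_mul _),
    intervalIntegral.integral_const_mul, ha, hb] at key
  linarith

open Filter Topology in
theorem wirtinger_inequality (hab : a < b) (hf : ∀ x ∈ Icc a b, HasDerivAt f (f' x) x)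
    (hf' : ContinuousOn f' (Icc a b)) (ha : f a = 0) (hb : f b = 0) :
    (π / (b - a)) ^ 2 * ∫ x in a..b, f x ^ 2 ≤ ∫ x in a..b, f' x ^ 2 := by
  have hlim : Tendsto (fun l => l ^ 2 * ∫ x in a..b, f x ^ 2) (𝓝[<] (π / (b - a)))
      (𝓝 ((π / (b - a)) ^ 2 * ∫ x in a..b, f x ^ 2)) :=
    (((continuous_pow 2).mul continuous_const).tendsto _).mono_left nhdsWithin_le_nhds
  refine le_of_tendsto hlim ?_
  filter_upwards [Ioo_mem_nhdsLT (div_pos pi_pos (sub_pos.2 hab))] with l hl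
  exact wirtinger_inequality_of_lt hab hf hf' ha hb hl.1.le hl.2

end Wirtinger

section Slab

variable {n : ℕ}

def slab (R : Set (Fin n → ℝ)) : Set (Fin (n + 1) → ℝ) :=
  {p | Fin.init p ∈ R ∧ p (Fin.last n) ∈ Ioo 0 1}

variable (n) in
def snocMeasurableEquiv : (Fin n → ℝ) × ℝ ≃ᵐ (Fin (n + 1) → ℝ) :=
  MeasurableEquiv.prodComm.trans
    (MeasurableEquiv.piFinSuccAbove (fun _ => ℝ) (Fin.last n)).symm

@[simp]
lemma snocMeasurableEquiv_apply (q : Fin n → ℝ) (z : ℝ) :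
    snocMeasurableEquiv n (q, z) = Fin.snoc q z :=
  Fin.insertNth_last' z q

lemma measurePreserving_snocMeasurableEquiv :
    MeasurePreserving (snocMeasurableEquiv n) (volume.prod volume) volume :=
  (volume_preserving_piFinSuccAbove (fun _ => ℝ) (Fin.last n)).symm.comp
    Measure.measurePreserving_swap

lemma snocMeasurableEquiv_preimage_slab (R : Set (Fin n → ℝ)) :
    snocMeasurableEquiv n ⁻¹' slab R = R ×ˢ Ioo 0 1 := by
  ext ⟨q, z⟩
  simp [slab]

lemma setIntegral_slab_nonneg {R : Set (Fin n → ℝ)} (hR : MeasurableSet R)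
    {F : (Fin (n + 1) → ℝ) → ℝ} (hF : IntegrableOn F (slab R))
    (hslice : ∀ q ∈ R, 0 ≤ ∫ z in Ioo 0 1, F (Fin.snoc q z)) :
    0 ≤ ∫ p in slab R, F p := by
  have e := measurePreserving_snocMeasurableEquiv (n := n)
  have he := (snocMeasurableEquiv n).measurableEmbedding
  rw [← e.integrableOn_comp_preimage he, snocMeasurableEquiv_preimage_slab] at hF
  rw [← e.setIntegral_preimage_emb he, snocMeasurableEquiv_preimage_slab,
    setIntegral_prod (fun x => F (snocMeasurableEquiv n x)) hF]
  exact setIntegral_nonneg hR fun q hq => by simpa using hslice q hq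

lemma hasDerivAt_snoc (q : Fin n → ℝ) (z : ℝ) :
    HasDerivAt (fun z : ℝ => (Fin.snoc q z : Fin (n + 1) → ℝ)) (Pi.single (Fin.last n) 1) z := by
  refine hasDerivAt_pi.2 fun i => ?_
  induction i using Fin.lastCases with
  | last =>
    simp only [Fin.snoc_last, Pi.single_eq_same]
    exact hasDerivAt_id' z
  | cast i => simpa [Fin.castSucc_ne_last] using hasDerivAt_const z (q i)

theorem poincare_slab {R : Set (Fin n → ℝ)} (hR : MeasurableSet R)
    {f g : (Fin (n + 1) → ℝ) → ℝ} (hf : IntegrableOn (fun p => f p ^ 2) (slab R))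
    (hg : IntegrableOn (fun p => g p ^ 2) (slab R)) (hgc : Continuous g)
    (hderiv : ∀ q ∈ R, ∀ z ∈ Icc (0 : ℝ) 1,
      HasDerivAt (fun z => f (Fin.snoc q z)) (g (Fin.snoc q z)) z)
    (h₀ : ∀ q ∈ R, f (Fin.snoc q 0) = 0) (h₁ : ∀ q ∈ R, f (Fin.snoc q 1) = 0) :
    π ^ 2 * ∫ p in slab R, f p ^ 2 ≤ ∫ p in slab R, g p ^ 2 := by
  suffices 0 ≤ ∫ p in slab R, (g p ^ 2 - π ^ 2 * f p ^ 2) by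
    rwa [integral_sub hg (hf.const_mul _), integral_const_mul, sub_nonneg] at this
  refine setIntegral_slab_nonneg hR (hg.sub (hf.const_mul _)) fun q hq => ?_
  have hgq : Continuous fun z => g (Fin.snoc q z) :=
    hgc.comp (continuous_const.finSnoc continuous_id)
  have hfq : ContinuousOn (fun z => f (Fin.snoc q z)) (Icc 0 1) :=
    fun z hz => (hderiv q hq z hz).continuousAt.continuousWithinAt
  have hslice := wirtinger_inequality zero_lt_one (hderiv q hq) hgq.continuousOn (h₀ q hq)
    (h₁ q hq)
  rw [sub_zero, div_one] at hslice
  rw [← integral_Ioc_eq_integral_Ioo, ← intervalIntegral.integral_of_le zero_le_one,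
    intervalIntegral.integral_sub, intervalIntegral.integral_const_mul, sub_nonneg]
  exacts [hslice, (hgq.pow 2).intervalIntegrable 0 1,
    ((hfq.pow 2).intervalIntegrable_of_Icc zero_le_one).const_mul _]

end Slab

lemma neg_le_two_mul_sum_mul {ι : Type*} [Fintype ι] {k : ℝ} (hk : 0 < k) (t : ℝ)
    (u w : ι → ℝ) :
    -(k * ∑ i, w i ^ 2 + t ^ 2 / k * ∑ i, u i ^ 2) ≤ 2 * t * ∑ i, u i * w i := by
  have hsq : 0 ≤ ∑ i, k * (w i + t / k * u i) ^ 2 :=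
    Finset.sum_nonneg fun i _ => mul_nonneg hk.le (sq_nonneg _)
  have hexpand : ∑ i, k * (w i + t / k * u i) ^ 2
      = k * ∑ i, w i ^ 2 + t ^ 2 / k * ∑ i, u i ^ 2 + 2 * t * ∑ i, u i * w i := by
    simp only [Finset.mul_sum, ← Finset.sum_add_distrib]
    refine Finset.sum_congr rfl fun i _ => ?_
    field_simp
    ring
  linarith

section VectorField

variable {v : (Fin 3 → ℝ) → (Fin 3 → ℝ)}

lemma sum_curl_sq_le (v : (Fin 3 → ℝ) → (Fin 3 → ℝ)) (x : Fin 3 → ℝ) :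
    ∑ i, curl v x i ^ 2 ≤ 2 * ∑ i, ∑ j, pder v x i j ^ 2 := by
  simp only [curl, Fin.sum_univ_three, Matrix.cons_val_zero, Matrix.cons_val_one,
    Matrix.cons_val_two, Matrix.head_cons, Matrix.tail_cons]
  nlinarith [sq_nonneg (pder v x 2 1 + pder v x 1 2), sq_nonneg (pder v x 0 2 + pder v x 2 0),
    sq_nonneg (pder v x 1 0 + pder v x 0 1), sq_nonneg (pder v x 0 0),
    sq_nonneg (pder v x 1 1), sq_nonneg (pder v x 2 2)]

lemma continuous_pder (hv : ContDiff ℝ 1 v) (i j : Fin 3) : Continuous fun x => pder v x i j :=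
  (continuous_apply i).comp ((hv.continuous_fderiv one_ne_zero).clm_apply continuous_const)

lemma continuous_curl (hv : ContDiff ℝ 1 v) : Continuous (curl v) := by
  have := continuous_pder hv
  refine continuous_pi fun i => ?_
  fin_cases i <;> simp only [curl] <;> fun_prop

lemma hasDerivAt_pder_snoc (hv : Differentiable ℝ v) (q : Fin 2 → ℝ) (i : Fin 3) (z : ℝ) :
    HasDerivAt (fun z => v (Fin.snoc q z) i) (pder v (Fin.snoc q z) i 2) z :=
  hasDerivAt_pi.1 ((hv _).hasFDerivAt.comp_hasDerivAt z (hasDerivAt_snoc q z)) i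

theorem poincare_slab_pder {R : Set (Fin 2 → ℝ)} (hR : MeasurableSet R)
    (hbdd : Bornology.IsBounded (slab R)) (hv : ContDiff ℝ 1 v)
    (h₀ : ∀ q ∈ R, v (Fin.snoc q 0) = 0) (h₁ : ∀ q ∈ R, v (Fin.snoc q 1) = 0) :
    π ^ 2 * ∫ x in slab R, ∑ i, v x i ^ 2 ≤ ∫ x in slab R, ∑ i, pder v x i 2 ^ 2 := by
  have hv2 : ∀ i, IntegrableOn (fun x => v x i ^ 2) (slab R) := fun i =>
    (((continuous_apply i).comp hv.continuous).pow 2).integrableOn_of_isBounded hbdd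
  have hpder2 : ∀ i, IntegrableOn (fun x => pder v x i 2 ^ 2) (slab R) := fun i =>
    ((continuous_pder hv i 2).pow 2).integrableOn_of_isBounded hbdd
  rw [integral_finsetSum _ fun i _ => hv2 i, integral_finsetSum _ fun i _ => hpder2 i,
    Finset.mul_sum]
  exact Finset.sum_le_sum fun i _ => poincare_slab hR (hv2 i) (hpder2 i) (continuous_pder hv i 2)
    (fun q _ z _ => hasDerivAt_pder_snoc (hv.differentiable one_ne_zero) q i z)
    (fun q hq => by simp [h₀ q hq]) (fun q hq => by simp [h₁ q hq])

/-- The integrand of `I(n) - I(n*)`, i.e. of the second variation `H(v)`. -/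
noncomputable def secondVariationDensity (t : ℝ) (v : (Fin 3 → ℝ) → (Fin 3 → ℝ))
    (x : Fin 3 → ℝ) : ℝ :=
  (∑ i, ∑ j, pder v x i j ^ 2) + 2 * t * ∑ i, v x i * curl v x i
    - (π ^ 2 / 4 + t ^ 2) * ∑ i, v x i ^ 2

lemma continuous_secondVariationDensity (t : ℝ) (hv : ContDiff ℝ 1 v) :
    Continuous (secondVariationDensity t v) := by
  have := continuous_pder hv
  have := continuous_curl hv
  have := hv.continuous
  unfold secondVariationDensity
  fun_prop

lemma one_sub_inv_two_mul_sqrt_two_nonneg : 0 ≤ 1 - 1 / (2 * √2) := by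
  have hs : 1 < √2 := by rw [lt_sqrt zero_le_one]; norm_num
  rw [sub_nonneg, div_le_one (by positivity)]
  linarith

lemma le_secondVariationDensity (t : ℝ) (v : (Fin 3 → ℝ) → (Fin 3 → ℝ)) (x : Fin 3 → ℝ) :
    (1 - 1 / (2 * √2)) * ∑ i, pder v x i 2 ^ 2
        - (π ^ 2 / 4 + (1 + 4 * √2) * t ^ 2) * ∑ i, v x i ^ 2
      ≤ secondVariationDensity t v x := by
  have hk : 0 < 1 / (4 * √2) := by positivity
  have hcauchy := neg_le_two_mul_sum_mul hk t (v x) (curl v x)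
  have hk' : t ^ 2 / (1 / (4 * √2)) = 4 * √2 * t ^ 2 := by field_simp
  have hcurl : 1 / (4 * √2) * ∑ i, curl v x i ^ 2
      ≤ 1 / (2 * √2) * ∑ i, ∑ j, pder v x i j ^ 2 :=
    calc _ ≤ 1 / (4 * √2) * (2 * ∑ i, ∑ j, pder v x i j ^ 2) := by
          gcongr; exact sum_curl_sq_le v x
      _ = _ := by field_simp; ring
  have hz : ∑ i, pder v x i 2 ^ 2 ≤ ∑ i, ∑ j, pder v x i j ^ 2 :=
    Finset.sum_le_sum fun i _ => Finset.single_le_sum (f := fun j => pder v x i j ^ 2)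
      (fun j _ => sq_nonneg _) (Finset.mem_univ 2)
  rw [hk'] at hcauchy
  unfold secondVariationDensity
  nlinarith [mul_le_mul_of_nonneg_left hz one_sub_inv_two_mul_sqrt_two_nonneg]

theorem setIntegral_secondVariationDensity_ge {R : Set (Fin 2 → ℝ)} (hR : MeasurableSet R)
    (hbdd : Bornology.IsBounded (slab R)) (t : ℝ) (hv : ContDiff ℝ 1 v)
    (h₀ : ∀ q ∈ R, v (Fin.snoc q 0) = 0) (h₁ : ∀ q ∈ R, v (Fin.snoc q 1) = 0) :
    (π ^ 2 * (1 - 1 / (2 * √2)) - π ^ 2 / 4 - (1 + 4 * √2) * t ^ 2)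
        * ∫ x in slab R, ∑ i, v x i ^ 2
      ≤ ∫ x in slab R, secondVariationDensity t v x := by
  have := continuous_pder hv
  have := hv.continuous
  have hQ : IntegrableOn (fun x => ∑ i, v x i ^ 2) (slab R) :=
    Continuous.integrableOn_of_isBounded (by fun_prop) hbdd
  have hP : IntegrableOn (fun x => ∑ i, pder v x i 2 ^ 2) (slab R) :=
    Continuous.integrableOn_of_isBounded (by fun_prop) hbdd
  calc _ ≤ (1 - 1 / (2 * √2)) * (∫ x in slab R, ∑ i, pder v x i 2 ^ 2)
        - (π ^ 2 / 4 + (1 + 4 * √2) * t ^ 2) * ∫ x in slab R, ∑ i, v x i ^ 2 := by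
        linear_combination mul_le_mul_of_nonneg_left (poincare_slab_pder hR hbdd hv h₀ h₁)
          one_sub_inv_two_mul_sqrt_two_nonneg
    _ = ∫ x in slab R, ((1 - 1 / (2 * √2)) * ∑ i, pder v x i 2 ^ 2
        - (π ^ 2 / 4 + (1 + 4 * √2) * t ^ 2) * ∑ i, v x i ^ 2) := by
      rw [integral_sub (hP.const_mul _) (hQ.const_mul _), integral_const_mul, integral_const_mul]
    _ ≤ _ := setIntegral_mono (Continuous.integrableOn_of_isBounded (by fun_prop) hbdd)
        ((continuous_secondVariationDensity t hv).integrableOn_of_isBounded hbdd)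
        (le_secondVariationDensity t v)

end VectorField

lemma coercivity_constant_pos {t : ℝ} (ht : 0 ≤ t) (ht' : t ≤ 0.766) :
    0 < π ^ 2 * (1 - 1 / (2 * √2)) - π ^ 2 / 4 - (1 + 4 * √2) * t ^ 2 := by
  have hs2 : √2 ^ 2 = 2 := sq_sqrt zero_le_two
  have hs : √2 < 1.4142136 := by nlinarith [sqrt_nonneg 2]
  have hinv : 1 / (2 * √2) = √2 / 4 := by field_simp; linarith
  have hπ : 9.8696 < π ^ 2 := by nlinarith [pi_gt_d6]
  have ht2 : t ^ 2 ≤ 0.586756 := by nlinarith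
  rw [hinv]
  nlinarith [mul_pos (by linarith : (0 : ℝ) < π ^ 2 - 9.8696)
    (by linarith : (0 : ℝ) < 1.4142136 - √2), sqrt_nonneg 2]

lemma snoc_eq_vecCons (q : Fin 2 → ℝ) (z : ℝ) : (Fin.snoc q z : Fin 3 → ℝ) = ![q 0, q 1, z] := by
  ext i
  fin_cases i <;> rfl

theorem second_variation_form_coercive_general (L₁ L₂ t : ℝ)
    (ht : 0 ≤ t) (ht' : t ≤ 0.766) :
    let Ω : Set (Fin 3 → ℝ) := {p : Fin 3 → ℝ |
      p 0 ∈ Set.Ioo (-L₁) L₁ ∧ p 1 ∈ Set.Ioo (-L₂) L₂ ∧ p 2 ∈ Set.Ioo (0 : ℝ) 1}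
    let H : ((Fin 3 → ℝ) → (Fin 3 → ℝ)) → ℝ := fun v =>
      ∫ x in Ω, ((∑ i : Fin 3, ∑ j : Fin 3, (pder v x i j) ^ 2)
        + 2 * t * (∑ i : Fin 3, v x i * curl v x i)
        - (π ^ 2 / 4 + t ^ 2) * ∑ i : Fin 3, (v x i) ^ 2)
    ∃ γ : ℝ, 0 < γ ∧
      γ = π ^ 2 * (1 - 1 / (2 * Real.sqrt 2)) - π ^ 2 / 4 - (1 + 4 * Real.sqrt 2) * t ^ 2 ∧
      ∀ v : (Fin 3 → ℝ) → (Fin 3 → ℝ), ContDiff ℝ 1 v →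
        (∀ x ∈ Set.Icc (-L₁) L₁, ∀ y ∈ Set.Icc (-L₂) L₂, v ![x, y, 0] = 0) →
        (∀ x ∈ Set.Icc (-L₁) L₁, ∀ y ∈ Set.Icc (-L₂) L₂, v ![x, y, 1] = 0) →
        (∀ y ∈ Set.Icc (-L₂) L₂, ∀ z ∈ Set.Icc (0 : ℝ) 1, v ![-L₁, y, z] = v ![L₁, y, z]) →
        (∀ x ∈ Set.Icc (-L₁) L₁, ∀ z ∈ Set.Icc (0 : ℝ) 1, v ![x, -L₂, z] = v ![x, L₂, z]) →
        H v ≥ γ * ∫ x in Ω, (∑ i : Fin 3, (v x i) ^ 2) := by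
  intro Ω H
  refine ⟨_, coercivity_constant_pos ht ht', rfl, fun v hv hbot htop _ _ => ?_⟩
  set R : Set (Fin 2 → ℝ) := {q | q 0 ∈ Ioo (-L₁) L₁ ∧ q 1 ∈ Ioo (-L₂) L₂}
  have hΩ : Ω = slab R := by
    ext p
    simp [Ω, R, slab, Fin.init, and_assoc]
  have hR : MeasurableSet R :=
    (measurableSet_Ioo.preimage (measurable_pi_apply 0)).inter
      (measurableSet_Ioo.preimage (measurable_pi_apply 1))
  have hbdd : Bornology.IsBounded Ω := by
    refine (Metric.isBounded_Icc ![-L₁, -L₂, 0] ![L₁, L₂, 1]).subset fun p hp => ?_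
    obtain ⟨⟨h0l, h0u⟩, ⟨h1l, h1u⟩, ⟨h2l, h2u⟩⟩ := hp
    refine ⟨fun i => ?_, fun i => ?_⟩ <;> fin_cases i <;> simp <;> linarith
  show _ ≤ ∫ x in Ω, secondVariationDensity t v x
  rw [hΩ] at hbdd ⊢
  refine setIntegral_secondVariationDensity_ge hR hbdd t hv (fun q hq => ?_) (fun q hq => ?_) <;>
    rw [snoc_eq_vecCons]
  exacts [hbot _ (Ioo_subset_Icc_self hq.1) _ (Ioo_subset_Icc_self hq.2),
    htop _ (Ioo_subset_Icc_self hq.1) _ (Ioo_subset_Icc_self hq.2)]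

theorem second_variation_form_coercive (L₁ L₂ t : ℝ) (hL₁ : 0 < L₁) (hL₂ : 0 < L₂)
    (ht : 0 ≤ t) (ht' : t ≤ 0.766) :
    let Ω : Set (Fin 3 → ℝ) := {p : Fin 3 → ℝ |
      p 0 ∈ Set.Ioo (-L₁) L₁ ∧ p 1 ∈ Set.Ioo (-L₂) L₂ ∧ p 2 ∈ Set.Ioo (0 : ℝ) 1}
    let H : ((Fin 3 → ℝ) → (Fin 3 → ℝ)) → ℝ := fun v =>
      ∫ x in Ω, ((∑ i : Fin 3, ∑ j : Fin 3, (pder v x i j) ^ 2)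
        + 2 * t * (∑ i : Fin 3, v x i * curl v x i)
        - (π ^ 2 / 4 + t ^ 2) * ∑ i : Fin 3, (v x i) ^ 2)
    ∃ γ : ℝ, 0 < γ ∧
      γ = π ^ 2 * (1 - 1 / (2 * Real.sqrt 2)) - π ^ 2 / 4 - (1 + 4 * Real.sqrt 2) * t ^ 2 ∧
      ∀ v : (Fin 3 → ℝ) → (Fin 3 → ℝ), ContDiff ℝ 1 v →
        (∀ x ∈ Set.Icc (-L₁) L₁, ∀ y ∈ Set.Icc (-L₂) L₂, v ![x, y, 0] = 0) →
        (∀ x ∈ Set.Icc (-L₁) L₁, ∀ y ∈ Set.Icc (-L₂) L₂, v ![x, y, 1] = 0) →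
        (∀ y ∈ Set.Icc (-L₂) L₂, ∀ z ∈ Set.Icc (0 : ℝ) 1, v ![-L₁, y, z] = v ![L₁, y, z]) →
        (∀ x ∈ Set.Icc (-L₁) L₁, ∀ z ∈ Set.Icc (0 : ℝ) 1, v ![x, -L₂, z] = v ![x, L₂, z]) →
        H v ≥ γ * ∫ x in Ω, (∑ i : Fin 3, (v x i) ^ 2) :=
  second_variation_form_coercive_general L₁ L₂ t ht ht'
end
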